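/- Let M ⊆ ℝ^{n+1} be a smooth connected locally strongly-convex hypersurface with y ∉ T_yM for all y ∈ M (where T_yM is the tangent space viewed as a linear subspace of ℝ^{n+1}), and define the polarity map ν: M → ℝ^{n+1} by the requirements ⟨ν_y, y⟩ = 1 and ν_y ⊥ T_yM. Then ν_y = N_y/ρ_y where N_y is the unit normal and ρ_y = ⟨N_y, y⟩ ≠ 0, and the Gauss curvature satisfies K_y = |det(Dν)_y| / (|y| · |ν_y|^{n+1}) for every y ∈ M, where (Dν)_y: T_yM → T_{ν_y}M* is the differential of ν. -/

import Mathlib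

open MeasureTheory Filter
open scoped ENNReal RealInnerProductSpace

noncomputable section

abbrev En (n : ℕ) := EuclideanSpace ℝ (Fin n)

/-- Legendre transform of an `EReal`-valued function: `ψ*(y) = sup_{x ∈ dom ψ} (⟨x,y⟩ - ψ x)`. -/
def legendre {n : ℕ} (ψ : En n → EReal) (y : En n) : EReal :=
  ⨆ x : {x : En n // ψ x < ⊤}, ((⟪x.1, y⟫ : ℝ) : EReal) - ψ x.1

/-- Convexity for `ℝ ∪ {+∞}`-valued functions. -/
def EConvexOn {n : ℕ} (ψ : En n → EReal) : Prop :=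
  ∀ x y : En n, ∀ a b : ℝ, 0 ≤ a → 0 ≤ b → a + b = 1 →
    ψ (a • x + b • y) ≤ (a : EReal) * ψ x + (b : EReal) * ψ y

/-- `t ^ (-s)` with the conventions `0^(-s) = ∞`, `∞^(-s) = 0` (for `s > 0`). -/
def negPow (t : EReal) (s : ℝ) : ℝ≥0∞ :=
  if t = ⊤ then 0 else if t ≤ 0 then ⊤ else ENNReal.ofReal (t.toReal ^ (-s))

/-- `I_p(ψ) = (∫ (ψ*)^{-(n+p)})^{-1/p} ∈ [0,∞]`. -/
def Ip (n : ℕ) (p : ℝ) (ψ : En n → EReal) : ℝ≥0∞ :=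
  (∫⁻ x, negPow (legendre ψ x) ((n : ℝ) + p)) ^ (-(1 : ℝ) / p)

/-- `ρ_y = ⟨y, N_y⟩` for `y = (x, ψ(x))` on the graph of `ψ`, where `N_y` is the unit normal
pointing to the concave side. -/
def rhoGraph {n : ℕ} (ψ : En n → ℝ) (x : En n) : ℝ :=
  (⟪x, gradient ψ x⟫ - ψ x) / Real.sqrt (1 + ‖gradient ψ x‖ ^ 2)

/-- The Gauss curvature of the graph of `ψ` at the point `(x, ψ(x))`. -/
def gaussGraph (n : ℕ) (ψ : En n → ℝ) (x : En n) : ℝ :=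
  LinearMap.det
      ((fderiv ℝ (fun w => gradient ψ w) x : En n →L[ℝ] En n) : En n →ₗ[ℝ] En n) *
    (1 + ‖gradient ψ x‖ ^ 2) ^ (-(n : ℝ) / 2 - 1)

/-- The Euclidean inner product on `ℝⁿ × ℝ = ℝ^{n+1}`. -/
def pairP {n : ℕ} (p q : En n × ℝ) : ℝ := ⟪p.1, q.1⟫ + p.2 * q.2

/-- The Euclidean norm on `ℝⁿ × ℝ = ℝ^{n+1}`. -/
def enormP {n : ℕ} (p : En n × ℝ) : ℝ := Real.sqrt (‖p.1‖ ^ 2 + p.2 ^ 2)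

/-- The volume distortion factor (`√det` of the Gram matrix) of a linear map
`ℝⁿ → ℝ^{n+1}`; used to define `|det|` of a map between tangent spaces. -/
def jacP {n : ℕ} (A : En n →L[ℝ] En n × ℝ) : ℝ :=
  Real.sqrt
    (Matrix.det (Matrix.of fun i j : Fin n =>
      pairP (A (EuclideanSpace.single i (1 : ℝ))) (A (EuclideanSpace.single j (1 : ℝ)))))

/-- The Euclidean unit normal to the graph of `ψ` at `(x, ψ(x))`, pointing to the concave
side. -/
def normalGraph {n : ℕ} (ψ : En n → ℝ) (x : En n) : En n × ℝ :=
  (Real.sqrt (1 + ‖gradient ψ x‖ ^ 2))⁻¹ • ((gradient ψ x, (-1 : ℝ)) : En n × ℝ)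

/-- The polarity map of the graph of `ψ`, in the graph parametrization. -/
def nuGraph {n : ℕ} (ψ : En n → ℝ) (x : En n) : En n × ℝ :=
  (⟪x, gradient ψ x⟫ - ψ x)⁻¹ • ((gradient ψ x, (-1 : ℝ)) : En n × ℝ)

-- ===== auxiliary lemmas =====

open Matrix in
lemma aux_det {n : ℕ} (Hm : Matrix (Fin n) (Fin n) ℝ) (xv gv : Fin n → ℝ) (r p : ℝ)
    (hr : r ≠ 0) (hrc : r = xv ⬝ᵥ gv - p) :
    Matrix.det ((r ^ 2)⁻¹ •
        (Hmᵀ * ((1 : Matrix (Fin n) (Fin n) ℝ) +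
          (Matrix.of fun i (a : Fin 2) => if a = 0 then xv i else gv i) *
          (!![(r^2)⁻¹ * (1 + gv ⬝ᵥ gv), -r⁻¹; -r⁻¹, 0] *
            (Matrix.of fun i (a : Fin 2) => if a = 0 then xv i else gv i)ᵀ)) * Hm))
      = ((r ^ 2)⁻¹) ^ (n + 1) * Hm.det ^ 2 * (p ^ 2 + xv ⬝ᵥ xv) := by
  set U : Matrix (Fin n) (Fin 2) ℝ := Matrix.of fun i (a : Fin 2) => if a = 0 then xv i else gv i
  set C : Matrix (Fin 2) (Fin 2) ℝ := !![(r^2)⁻¹ * (1 + gv ⬝ᵥ gv), -r⁻¹; -r⁻¹, 0]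
  rw [Matrix.det_smul, Matrix.det_mul, Matrix.det_mul, Matrix.det_transpose]
  have h2 := Matrix.det_one_add_mul_comm U (C * Uᵀ)
  rw [h2]
  have e1 : ∀ a b, ((C * Uᵀ) * U) a b
      = C a 0 * ∑ k, xv k * U k b + C a 1 * ∑ k, gv k * U k b := by
    intro a b
    simp only [Matrix.mul_apply, Matrix.transpose_apply, Fin.sum_univ_two,
      Finset.mul_sum, ← Finset.sum_add_distrib]
    refine Finset.sum_congr rfl fun k _ => ?_
    simp only [U, Matrix.of_apply]
    rw [if_neg (by decide : ¬ ((1:Fin 2) = 0)), if_pos trivial]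
    ring
  have hc : (∑ k, xv k * gv k) = r + p := by
    have : xv ⬝ᵥ gv = r + p := by rw [hrc]; ring
    simpa [dotProduct] using this
  have hc2 : (∑ k, gv k * xv k) = r + p := by
    rw [← hc]; exact Finset.sum_congr rfl fun k _ => mul_comm _ _
  have h3 : Matrix.det ((1 : Matrix (Fin 2) (Fin 2) ℝ) + C * Uᵀ * U) =
      (p ^ 2 + xv ⬝ᵥ xv) * (r ^ 2)⁻¹ := by
    rw [Matrix.det_fin_two]
    simp only [Matrix.add_apply, Matrix.one_apply, e1]
    simp only [U, C, Matrix.of_apply, Matrix.cons_val', Matrix.cons_val_zero,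
      Matrix.cons_val_one, Matrix.head_cons, Matrix.empty_val', Matrix.cons_val_fin_one,
      Matrix.head_fin_const, Fin.one_eq_zero_iff, dotProduct]
    norm_num
    rw [hc, hc2]
    field_simp
    ring
  rw [h3, Fintype.card_fin]
  ring

lemma aux_final (n : ℕ) (d S m R : ℝ) (hd : 0 < d) (hS : 0 < S) (hm : 0 ≤ m) (hR : 0 < R) :
    d * S ^ (-(n:ℝ)/2 - 1) * (Real.sqrt S * Real.sqrt m * Real.sqrt (R⁻¹ * S) ^ (n+1))
      = Real.sqrt ((R⁻¹)^(n+1) * (d^2 * m)) := by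
  have hRi : (0:ℝ) ≤ R⁻¹ := by positivity
  rw [Real.sqrt_mul (by positivity : (0:ℝ) ≤ R⁻¹ ^ (n+1)),
    Real.sqrt_mul (by positivity : (0:ℝ) ≤ d^2) m, Real.sqrt_sq hd.le,
    Real.sqrt_mul hRi S, mul_pow]
  have hsp : ∀ (a : ℝ), 0 ≤ a → Real.sqrt (a ^ (n+1)) = Real.sqrt a ^ (n+1) := by
    intro a ha
    rw [Real.sqrt_eq_rpow, Real.sqrt_eq_rpow, ← Real.rpow_natCast (a ^ ((1:ℝ)/2)) (n+1),
      ← Real.rpow_natCast a (n+1), ← Real.rpow_mul ha, ← Real.rpow_mul ha]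
    ring_nf
  rw [hsp _ hRi]
  have hS2 : S ^ (-(n:ℝ)/2 - 1) * (Real.sqrt S * Real.sqrt S ^ (n+1)) = 1 := by
    rw [Real.sqrt_eq_rpow, ← Real.rpow_natCast (S ^ ((1:ℝ)/2)) (n+1), ← Real.rpow_mul hS.le,
      ← Real.rpow_add hS, ← Real.rpow_add hS]
    rw [show -(n:ℝ)/2 - 1 + (1/2 + 1/2 * (↑(n+1))) = 0 by push_cast; ring]
    exact Real.rpow_zero S
  calc d * S ^ (-(n:ℝ)/2 - 1) *
        (Real.sqrt S * Real.sqrt m * (Real.sqrt R⁻¹ ^ (n+1) * Real.sqrt S ^ (n+1)))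
      = (S ^ (-(n:ℝ)/2 - 1) * (Real.sqrt S * Real.sqrt S ^ (n+1))) *
          (d * Real.sqrt m * Real.sqrt R⁻¹ ^ (n+1)) := by ring
    _ = Real.sqrt R⁻¹ ^ (n + 1) * (d * Real.sqrt m) := by rw [hS2]; ring

theorem statement19 {n : ℕ} (L : Set (En n)) (hLopen : IsOpen L)
    (ψ : En n → ℝ) (hsm : ContDiffOn ℝ (⊤ : ℕ∞) ψ L)
    (hsc : ∀ x ∈ L, ∀ v : En n, v ≠ 0 →
      0 < ⟪(fderiv ℝ (fun y => gradient ψ y) x) v, v⟫)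
    (hρ : ∀ x ∈ L, ⟪x, gradient ψ x⟫ - ψ x ≠ 0) :
    ∀ x ∈ L,
      nuGraph ψ x = (rhoGraph ψ x)⁻¹ • normalGraph ψ x ∧
      pairP (nuGraph ψ x) (x, ψ x) = 1 ∧
      (∀ v : En n, pairP (nuGraph ψ x) (v, (fderiv ℝ ψ x) v) = 0) ∧
      gaussGraph n ψ x *
          (jacP (fderiv ℝ (fun z => ((z, ψ z) : En n × ℝ)) x) *
            enormP ((x, ψ x) : En n × ℝ) * enormP (nuGraph ψ x) ^ (n + 1))
        = jacP (fderiv ℝ (fun z => nuGraph ψ z) x) := by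
  intro x hx
  have hψat : ContDiffAt ℝ (⊤ : ℕ∞) ψ x := hsm.contDiffAt (hLopen.mem_nhds hx)
  have hr : (⟪x, gradient ψ x⟫ - ψ x) ≠ 0 := hρ x hx
  have hS : (0:ℝ) < 1 + ‖gradient ψ x‖ ^ 2 := by positivity
  have hinner : ∀ w : En n, ⟪gradient ψ x, w⟫ = fderiv ℝ ψ x w := fun _ =>
    InnerProductSpace.toDual_symm_apply
  refine ⟨?_, ?_, ?_, ?_⟩
  · -- goal 1
    unfold nuGraph rhoGraph normalGraph
    rw [smul_smul]
    congr 1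
    have hSs : Real.sqrt (1 + ‖gradient ψ x‖ ^ 2) ≠ 0 := by positivity
    rw [div_eq_mul_inv, mul_inv, inv_inv, mul_assoc, mul_inv_cancel₀ hSs, mul_one]
  · -- goal 2
    have hcomm : ⟪gradient ψ x, x⟫ = ⟪x, gradient ψ x⟫ := real_inner_comm _ _
    simp only [pairP, nuGraph, Prod.smul_fst, Prod.smul_snd, smul_eq_mul,
      real_inner_smul_left, hcomm]
    linear_combination inv_mul_cancel₀ hr
  · -- goal 3
    intro v
    simp only [pairP, nuGraph, Prod.smul_fst, Prod.smul_snd, smul_eq_mul,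
      real_inner_smul_left, hinner]
    ring
  · -- goal 4
    classical
    -- derivative facts
    have hψd : HasFDerivAt ψ (fderiv ℝ ψ x) x := (hψat.differentiableAt (by simp)).hasFDerivAt
    have hfd1 : DifferentiableAt ℝ (fderiv ℝ ψ) x :=
      (hψat.fderiv_right (m := 1) (by exact (WithTop.coe_le_coe.mpr (le_top : (1 + 1 : ℕ∞) ≤ ⊤)))).differentiableAt one_ne_zero
    have hGd : HasFDerivAt (fun z => gradient ψ z)
        (fderiv ℝ (fun z => gradient ψ z) x) x :=
      ((((InnerProductSpace.toDual ℝ (En n)).symm.toContinuousLinearEquiv.differentiableAt).comp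
        x hfd1)).hasFDerivAt
    -- second derivative bilinear form
    have hfd2 : ∀ v w : En n, ⟪fderiv ℝ (fun z => gradient ψ z) x v, w⟫ = fderiv ℝ (fderiv ℝ ψ) x v w := by
      intro v w
      have hc : (fun z => gradient ψ z)
          = (⇑(InnerProductSpace.toDual ℝ (En n)).symm) ∘ (fderiv ℝ ψ) := rfl
      rw [hc, LinearIsometryEquiv.comp_fderiv]
      exact InnerProductSpace.toDual_symm_apply
    have hsymm : ∀ v w : En n, ⟪fderiv ℝ (fun z => gradient ψ z) x v, w⟫ = ⟪fderiv ℝ (fun z => gradient ψ z) x w, v⟫ := by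
      intro v w
      rw [hfd2, hfd2]
      exact hψat.isSymmSndFDerivAt (by simp; exact (WithTop.coe_le_coe.mpr (le_top : (2 : ℕ∞) ≤ ⊤))) v w
    -- formula for the derivative of nuGraph
    have hDν : ∀ v : En n, fderiv ℝ (fun z => nuGraph ψ z) x v =
        (⟪x, gradient ψ x⟫ - ψ x)⁻¹ • ((fderiv ℝ (fun z => gradient ψ z) x v : En n), (0:ℝ)) +
        (-((⟪x, gradient ψ x⟫ - ψ x) ^ 2)⁻¹ * ⟪x, fderiv ℝ (fun z => gradient ψ z) x v⟫) •
          ((gradient ψ x, (-1:ℝ)) : En n × ℝ) := by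
      intro v
      have hrd : HasFDerivAt (fun z => ⟪z, gradient ψ z⟫ - ψ z)
          (((fderivInnerCLM ℝ (x, gradient ψ x)).comp
            ((ContinuousLinearMap.id ℝ (En n)).prod (fderiv ℝ (fun z => gradient ψ z) x)))
            - fderiv ℝ ψ x) x :=
        ((hasFDerivAt_id x).inner ℝ hGd).sub hψd
      have hinvd : HasFDerivAt (fun z => (⟪z, gradient ψ z⟫ - ψ z)⁻¹)
          ((-((⟪x, gradient ψ x⟫ - ψ x) ^ 2)⁻¹) •
            (((fderivInnerCLM ℝ (x, gradient ψ x)).comp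
              ((ContinuousLinearMap.id ℝ (En n)).prod (fderiv ℝ (fun z => gradient ψ z) x)))
              - fderiv ℝ ψ x)) x := by
        have := (hasDerivAt_inv hr).comp_hasFDerivAt x hrd
        simpa [div_eq_mul_inv, neg_div, Function.comp_def] using this
      have hpaird : HasFDerivAt (fun z => ((gradient ψ z, (-1:ℝ)) : En n × ℝ))
          ((fderiv ℝ (fun z => gradient ψ z) x).prod 0) x :=
        hGd.prodMk (hasFDerivAt_const _ _)
      have hν : HasFDerivAt (fun z => nuGraph ψ z) _ x := hinvd.smul hpaird
      rw [hν.fderiv]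
      simp [ContinuousLinearMap.smul_apply, fderivInnerCLM_apply, hinner,
        real_inner_comm (gradient ψ x) v]
    -- formula for the derivative of the graph map
    have hDγ : ∀ v : En n, fderiv ℝ (fun z => ((z, ψ z) : En n × ℝ)) x v
        = ((v, ⟪gradient ψ x, v⟫) : En n × ℝ) := by
      intro v
      have hγd : HasFDerivAt (fun z => ((z, ψ z) : En n × ℝ))
          ((ContinuousLinearMap.id ℝ (En n)).prod (fderiv ℝ ψ x)) x :=
        (hasFDerivAt_id x).prodMk hψd
      rw [hγd.fderiv]
      simp [hinner]
    -- ==== notation ====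
    set H : En n →L[ℝ] En n := fderiv ℝ (fun z => gradient ψ z) x with hHdef
    set g : En n := gradient ψ x with hgdef
    set rr : ℝ := ⟪x, g⟫ - ψ x with hrrdef
    set S : ℝ := 1 + ‖g‖ ^ 2 with hSdef
    set xv : Fin n → ℝ := fun i => x i with hxvdef
    set gv : Fin n → ℝ := fun i => g i with hgvdef
    set Hm : Matrix (Fin n) (Fin n) ℝ :=
      Matrix.of (fun k i : Fin n => (H (EuclideanSpace.single i (1:ℝ))) k) with hHmdef
    set U : Matrix (Fin n) (Fin 2) ℝ :=
      Matrix.of (fun i (a : Fin 2) => if a = 0 then xv i else gv i) with hUdef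
    set C : Matrix (Fin 2) (Fin 2) ℝ :=
      !![(rr^2)⁻¹ * (1 + dotProduct gv gv), -rr⁻¹; -rr⁻¹, 0] with hCdef
    have hdot : ∀ u w : En n, ⟪u, w⟫ = ∑ i, u i * w i := fun u w => by
      simp [PiLp.inner_apply, RCLike.inner_apply, mul_comm]
    have hgg : dotProduct gv gv = ‖g‖ ^ 2 := by
      rw [← real_inner_self_eq_norm_sq, hdot g g]; rfl
    have hxx : dotProduct xv xv = ‖x‖ ^ 2 := by
      rw [← real_inner_self_eq_norm_sq, hdot x x]; rfl
    have hrc : rr = dotProduct xv gv - ψ x := by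
      rw [hrrdef, hdot x g]; rfl
    have hsingle : ∀ (w : En n) (i : Fin n), ⟪EuclideanSpace.single i (1:ℝ), w⟫ = w i := by
      intro w i; simp [EuclideanSpace.inner_single_left]
    -- ==== positivity of det Hm ====
    have hsum : ∀ u : En n, ∑ i, u i • EuclideanSpace.single i (1:ℝ) = u := by
      intro u
      have := (EuclideanSpace.basisFun (Fin n) ℝ).toBasis.sum_repr u
      simpa [EuclideanSpace.basisFun_apply] using this
    have hmulVec : ∀ v : Fin n → ℝ, ∀ k, Matrix.mulVec Hm v k
        = (H ((WithLp.equiv 2 (Fin n → ℝ)).symm v)) k := by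
      intro v k
      set u : En n := (WithLp.equiv 2 (Fin n → ℝ)).symm v with hu
      have h1 : H u = ∑ i, u i • H (EuclideanSpace.single i (1:ℝ)) := by
        conv_lhs => rw [← hsum u]
        rw [map_sum]
        exact Finset.sum_congr rfl fun i _ => H.map_smul _ _
      have h2 : (H u) k = ∑ i, u i * (H (EuclideanSpace.single i (1:ℝ))) k := by
        rw [← hsingle (H u) k, h1, inner_sum]
        refine Finset.sum_congr rfl fun i _ => ?_
        rw [real_inner_smul_right, hsingle]
      rw [h2]
      simp only [Matrix.mulVec, dotProduct, Hm, Matrix.of_apply]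
      exact Finset.sum_congr rfl fun i _ => mul_comm _ _
    have hherm : Hm.IsHermitian := by
      show Hm.conjTranspose = Hm
      ext i j
      simp only [Matrix.conjTranspose_apply, star_trivial, hHmdef, Matrix.of_apply]
      rw [← hsingle (H (EuclideanSpace.single j (1:ℝ))) i,
        ← hsingle (H (EuclideanSpace.single i (1:ℝ))) j,
        real_inner_comm, hsymm, real_inner_comm]
    have hdpos : 0 < Hm.det := by
      have hpd : Hm.PosDef := by
        refine Matrix.posDef_iff_dotProduct_mulVec.mpr ⟨hherm, fun v hv => ?_⟩
        set u : En n := (WithLp.equiv 2 (Fin n → ℝ)).symm v with hu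
        have hune : u ≠ 0 := fun h0 => hv (by
          have := congrArg (WithLp.equiv 2 (Fin n → ℝ)) h0
          simpa [hu] using this)
        have hq := hsc x hx u hune
        have heq : dotProduct (star v) (Matrix.mulVec Hm v) = ⟪H u, u⟫ := by
          rw [real_inner_comm, hdot u (H u)]
          simp only [dotProduct, star_trivial]
          refine Finset.sum_congr rfl fun k _ => ?_
          rw [hmulVec v k]
          rfl
        rw [heq]
        exact hq
      exact hpd.det_pos
    -- ==== Gram matrix of Dν ====
    have hGram : (Matrix.of fun i j : Fin n =>
        pairP (fderiv ℝ (fun z => nuGraph ψ z) x (EuclideanSpace.single i (1 : ℝ)))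
          (fderiv ℝ (fun z => nuGraph ψ z) x (EuclideanSpace.single j (1 : ℝ))))
        = (rr ^ 2)⁻¹ • (Hm.transpose * ((1 : Matrix (Fin n) (Fin n) ℝ) + U * (C * U.transpose)) * Hm) := by
      have hsplit : Hm.transpose * ((1 : Matrix (Fin n) (Fin n) ℝ) + U * (C * U.transpose)) * Hm
          = Hm.transpose * Hm + ((Hm.transpose * U) * C) * (U.transpose * Hm) := by
        rw [Matrix.mul_add, Matrix.mul_one, Matrix.add_mul]
        simp only [Matrix.mul_assoc]
      have hW : ∀ i j, (Hm.transpose * Hm) i j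
          = ⟪H (EuclideanSpace.single i (1:ℝ)), H (EuclideanSpace.single j (1:ℝ))⟫ := by
        intro i j
        rw [hdot, Matrix.mul_apply]
        exact Finset.sum_congr rfl fun k _ => rfl
      have hQ : ∀ i (a : Fin 2), (Hm.transpose * U) i a
          = if a = 0 then ⟪H (EuclideanSpace.single i (1:ℝ)), x⟫
            else ⟪H (EuclideanSpace.single i (1:ℝ)), g⟫ := by
        intro i a
        by_cases ha : a = 0 <;>
          [rw [if_pos ha]; rw [if_neg ha]] <;>
          rw [hdot, Matrix.mul_apply] <;>
          exact Finset.sum_congr rfl fun k _ => by simp [U, Hm, ha, xv, gv]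
      have hQ' : ∀ (a : Fin 2) j, (U.transpose * Hm) a j
          = if a = 0 then ⟪H (EuclideanSpace.single j (1:ℝ)), x⟫
            else ⟪H (EuclideanSpace.single j (1:ℝ)), g⟫ := by
        intro a j
        by_cases ha : a = 0 <;>
          [rw [if_pos ha]; rw [if_neg ha]] <;>
          rw [hdot, Matrix.mul_apply] <;>
          exact Finset.sum_congr rfl fun k _ => by simp [U, Hm, ha, mul_comm, xv, gv]
      ext i j
      rw [Matrix.of_apply, hDν, hDν]
      rw [Matrix.smul_apply, hsplit, Matrix.add_apply, hW]
      simp only [Matrix.mul_apply, Fin.sum_univ_two]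
      simp only [← Matrix.mul_apply, hQ, hQ']
      simp only [if_pos, if_neg (by decide : ¬ ((1:Fin 2) = 0)), reduceIte]
      simp only [hCdef, Matrix.cons_val', Matrix.cons_val_zero, Matrix.cons_val_one,
        Matrix.head_cons, Matrix.empty_val', Matrix.cons_val_fin_one, Matrix.head_fin_const,
        Matrix.of_apply]
      -- now expand the left side
      simp only [pairP, Prod.fst_add, Prod.snd_add, Prod.smul_mk, smul_eq_mul,
        inner_add_left, inner_add_right, real_inner_smul_left, real_inner_smul_right,
        mul_zero, zero_mul, add_zero, mul_neg, neg_mul, mul_one, neg_neg, hgg]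
      rw [real_inner_self_eq_norm_sq g]
      rw [real_inner_comm g (H (EuclideanSpace.single j (1:ℝ))),
          real_inner_comm x (H (EuclideanSpace.single i (1:ℝ))),
          real_inner_comm x (H (EuclideanSpace.single j (1:ℝ)))]
      rw [show ((rr:ℝ)^2)⁻¹ = rr⁻¹ * rr⁻¹ by rw [sq, mul_inv]]
      ring
    -- ==== determinant value ====
    have hdetNm : Matrix.det (Matrix.of fun i j : Fin n =>
        pairP (fderiv ℝ (fun z => nuGraph ψ z) x (EuclideanSpace.single i (1 : ℝ)))
          (fderiv ℝ (fun z => nuGraph ψ z) x (EuclideanSpace.single j (1 : ℝ))))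
        = ((rr ^ 2)⁻¹) ^ (n + 1) * (Hm.det ^ 2 * (‖x‖ ^ 2 + ψ x ^ 2)) := by
      rw [hGram, hUdef, hCdef]
      rw [aux_det Hm xv gv rr (ψ x) hr hrc, hxx]
      ring
    -- ==== Gram matrix of Dγ ====
    have hjacγ : jacP (fderiv ℝ (fun z => ((z, ψ z) : En n × ℝ)) x) = Real.sqrt S := by
      unfold jacP
      have hMγ : (Matrix.of fun i j : Fin n =>
          pairP (fderiv ℝ (fun z => ((z, ψ z) : En n × ℝ)) x (EuclideanSpace.single i (1 : ℝ)))
            (fderiv ℝ (fun z => ((z, ψ z) : En n × ℝ)) x (EuclideanSpace.single j (1 : ℝ))))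
          = (1 : Matrix (Fin n) (Fin n) ℝ) + Matrix.replicateCol (Fin 1) gv * Matrix.replicateRow (Fin 1) gv := by
        ext i j
        rw [Matrix.of_apply, hDγ, hDγ]
        simp only [pairP, Matrix.add_apply, Matrix.one_apply, Matrix.mul_apply,
          Matrix.replicateCol_apply, Matrix.replicateRow_apply, Finset.univ_unique, Finset.sum_const,
          Finset.card_singleton, one_smul]
        have h1 : ⟪g, (EuclideanSpace.single i (1:ℝ) : En n)⟫ = gv i := by
          rw [real_inner_comm]; exact hsingle g i
        have h2 : ⟪g, (EuclideanSpace.single j (1:ℝ) : En n)⟫ = gv j := by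
          rw [real_inner_comm]; exact hsingle g j
        have h3 : ⟪(EuclideanSpace.single i (1:ℝ) : En n), EuclideanSpace.single j (1:ℝ)⟫
            = if i = j then (1:ℝ) else 0 := by
          rw [hsingle (EuclideanSpace.single j (1:ℝ)) i]
          simp [EuclideanSpace.single_apply]
        rw [h1, h2, h3]
      rw [hMγ]
      have hd := Matrix.det_one_add_replicateCol_mul_replicateRow (ι := Fin 1) gv gv
      convert congrArg Real.sqrt hd using 2
      · congr
      · rw [hgg]
    -- ==== norms ====
    have hnormy : enormP ((x, ψ x) : En n × ℝ) = Real.sqrt (‖x‖ ^ 2 + ψ x ^ 2) := rfl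
    have hnormν : enormP (nuGraph ψ x) = Real.sqrt ((rr ^ 2)⁻¹ * S) := by
      unfold enormP nuGraph
      rw [← hgdef, ← hrrdef]
      congr 1
      rw [Prod.smul_fst, Prod.smul_snd, norm_smul, mul_pow, smul_eq_mul]
      rw [hSdef]
      rw [Real.norm_eq_abs, sq_abs]
      field_simp
      ring
    -- ==== gauss ====
    have hdetH : LinearMap.det ((H : En n →L[ℝ] En n) : En n →ₗ[ℝ] En n) = Hm.det := by
      rw [← LinearMap.det_toMatrix (EuclideanSpace.basisFun (Fin n) ℝ).toBasis]
      have : (LinearMap.toMatrix (EuclideanSpace.basisFun (Fin n) ℝ).toBasis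
          (EuclideanSpace.basisFun (Fin n) ℝ).toBasis) ((H : En n →L[ℝ] En n) : En n →ₗ[ℝ] En n)
          = Hm := by
        ext k i
        simp [LinearMap.toMatrix_apply, EuclideanSpace.basisFun_apply, Hm]
      rw [this]
    have hgauss : gaussGraph n ψ x = Hm.det * S ^ (-(n : ℝ) / 2 - 1) := by
      unfold gaussGraph
      rw [← hgdef, ← hSdef, ← hHdef, hdetH]
    -- ==== final computation ====
    have hjacν : jacP (fderiv ℝ (fun z => nuGraph ψ z) x)
        = Real.sqrt (((rr ^ 2)⁻¹) ^ (n + 1) * (Hm.det ^ 2 * (‖x‖ ^ 2 + ψ x ^ 2))) := by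
      unfold jacP
      rw [hdetNm]
    rw [hgauss, hjacγ, hnormy, hnormν, hjacν]
    exact aux_final n Hm.det S (‖x‖ ^ 2 + ψ x ^ 2) (rr ^ 2) hdpos hS (by positivity)
      (by positivity)
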